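/- arXiv:1903.08015 — 2 statements merged into one kernel-verified Lean document; each statement's English description precedes it below -/
import Mathlib

section
/- Let G = Z/2Z act on a finitely generated torsion-free abelian group M. Then M decomposes as a direct sum of G-submodules, each of which is isomorphic to one of: Z with trivial G-action, Z with the sign action (the generator acts by -1), or Z[G] ≅ Z² with the generator swapping the two coordinates. -/
/-!
By induction on the rank it suffices to split off one `σ`-stable summand of standard type with a
`σ`-stable complement. Such a summand arises as the image of an equivariant section `s` of an
equivariant map `Φ : M → V`, the complement being `ker Φ`.

If `M` is the sum of the eigenspaces `M⁺` and `M⁻` of `σ`, take a primitive eigenvector `e` and a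
functional `α` with `α e = 1`; composing `α` with the projection onto the eigenspace of `e` splits
off `ℤ e`. Otherwise pick `g ∉ M⁺ + M⁻`. Then `g + σ g` and `g - σ g` are odd multiples of
primitive eigenvectors `e` and `f` (an even multiple would put `g` in `M⁺ + M⁻`), so some
`w = g - c e - d f` has `w + σ w = e` and `w - σ w = f`. From functionals taking the value `1` on
`e` and on `f` one builds `φ` with `φ w = 1`, `φ (σ w) = 0`, and `m ↦ (φ m, φ (σ m))` splits off
`ℤ w ⊕ ℤ σ w ≅ ℤ[ℤ/2ℤ]`.
-/

open Module Submodule LinearMap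

theorem Module.Free.exists_smul_eq_and_dual_eq_one {R M : Type*} [CommRing R] [IsDomain R]
    [IsPrincipalIdealRing R] [AddCommGroup M] [Module R M] [Module.Free R M] [Module.Finite R M]
    {x : M} (hx : x ≠ 0) : ∃ (a : R) (e : M) (α : Dual R M), a • e = x ∧ α e = 1 := by
  -- `d` generates the ideal of all values `φ x`; it divides every coordinate of `x`.
  obtain ⟨d, hd⟩ := (IsPrincipalIdealRing.principal (range (Dual.eval R M x))).principal
  have hdvd (φ : Dual R M) : ∃ q, q • d = φ x :=
    mem_span_singleton.mp (hd ▸ mem_range_self (Dual.eval R M x) φ)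
  obtain ⟨α, hα⟩ : d ∈ range (Dual.eval R M x) := hd ▸ mem_span_singleton_self d
  have hd0 : d ≠ 0 := by
    rintro rfl
    obtain ⟨φ, hφ⟩ := Projective.exists_dual_ne_zero R hx
    obtain ⟨q, hq⟩ := hdvd φ
    exact hφ (by simp [← hq])
  let b := Free.chooseBasis R M
  choose q hq using fun i => hdvd (b.coord i)
  have hde : d • ∑ i, q i • b i = x := by
    conv_rhs => rw [← b.sum_repr x]
    simp only [Finset.smul_sum, smul_smul, mul_comm d, ← smul_eq_mul, hq, Basis.coord_apply]
  refine ⟨d, _, α, hde, mul_left_cancel₀ hd0 ?_⟩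
  rw [mul_one, ← smul_eq_mul, ← map_smul, hde]
  exact hα

theorem iSup_fin_cons {α : Type*} [CompleteLattice α] {n : ℕ} (a : α) (f : Fin n → α) :
    ⨆ i, (Fin.cons a f : Fin (n + 1) → α) i = a ⊔ ⨆ i, f i :=
  le_antisymm
    (iSup_le fun i => Fin.cases le_sup_left (fun j => le_sup_of_le_right (le_iSup f j)) i)
    (sup_le (le_iSup_of_le 0 le_rfl) (iSup_le fun j => le_iSup_of_le j.succ le_rfl))

theorem iSupIndep.fin_cons {α : Type*} [CompleteLattice α] [IsModularLattice α] {n : ℕ} {a : α}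
    {f : Fin n → α} (hf : iSupIndep f) (ha : Disjoint a (⨆ i, f i)) :
    iSupIndep (Fin.cons a f : Fin (n + 1) → α) := by
  rw [iSupIndep_def]
  refine Fin.cases ?_ fun k => ?_
  · refine ha.mono_right (iSup₂_le fun j hj => ?_)
    obtain ⟨l, rfl⟩ := Fin.exists_succ_eq.mpr hj
    exact le_iSup f l
  · have hle : ⨆ (j) (_ : j ≠ k.succ), (Fin.cons a f : Fin (n + 1) → α) j ≤
        a ⊔ ⨆ (l) (_ : l ≠ k), f l := by
      refine iSup₂_le fun j hj => Fin.cases (fun _ => le_sup_left) (fun l hl => ?_) j hj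
      exact le_sup_of_le_right (le_iSup₂_of_le l (fun h => hl (h ▸ rfl)) le_rfl)
    refine Disjoint.mono_right hle ?_
    rw [sup_comm]
    exact (hf k).disjoint_sup_right_of_disjoint_sup_left
      (ha.symm.mono_left (sup_le (le_iSup f k) (iSup₂_le fun l _ => le_iSup f l)))

theorem Submodule.finrank_lt_finrank_of_isCompl {R M : Type*} [CommRing R] [IsDomain R]
    [IsPrincipalIdealRing R] [AddCommGroup M] [Module R M] [Module.Finite R M]
    [Module.IsTorsionFree R M] {A K : Submodule R M} (h : IsCompl A K) (hA : A ≠ ⊥) :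
    finrank R K < finrank R M := by
  have hsum := (prodEquivOfIsCompl A K h).finrank_eq
  rw [finrank_prod] at hsum
  have := finrank_eq_zero.not.mpr hA
  omega

namespace LinearMap

variable {R M V : Type*} [Ring R] [AddCommGroup M] [Module R M] [AddCommGroup V] [Module R V]
  {σ : Module.End R M} {τ : Module.End R V} {Φ : M →ₗ[R] V} {s : V →ₗ[R] M}

theorem isCompl_range_ker_of_comp_eq_id (h : Φ ∘ₗ s = id) : IsCompl (range s) (ker Φ) := by
  have hproj : IsProj (range s) (s ∘ₗ Φ) :=
    ⟨fun m => mem_range_self s (Φ m), by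
      rintro _ ⟨v, rfl⟩
      rw [comp_apply, ← comp_apply Φ s, h, id_apply]⟩
  simpa [ker_comp_of_ker_eq_bot Φ (ker_eq_bot_of_inverse h)] using hproj.isCompl

theorem ker_mem_invtSubmodule_of_comp_eq (hΦ : Φ ∘ₗ σ = τ ∘ₗ Φ) : ker Φ ∈ σ.invtSubmodule :=
  fun m (hm : Φ m = 0) => show Φ (σ m) = 0 by rw [← comp_apply, hΦ, comp_apply, hm, map_zero]

theorem range_mem_invtSubmodule_of_comp_eq (hs : σ ∘ₗ s = s ∘ₗ τ) :
    range s ∈ σ.invtSubmodule := by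
  rintro _ ⟨v, rfl⟩
  exact ⟨τ v, by rw [← comp_apply, ← hs, comp_apply]⟩

theorem exists_equiv_range_of_comp_eq (h : Φ ∘ₗ s = id) (hΦ : Φ ∘ₗ σ = τ ∘ₗ Φ) :
    ∃ e : range s ≃ₗ[R] V, ∀ x y : range s, σ x = y → e y = τ (e x) := by
  refine ⟨(LinearEquiv.ofLeftInverse (g := Φ) (LinearMap.congr_fun h)).symm, fun x y hxy => ?_⟩
  simp only [LinearEquiv.ofLeftInverse_symm_apply, ← hxy]
  exact LinearMap.congr_fun hΦ x

end LinearMap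

section Involution

variable {M : Type*} [AddCommGroup M]

/-- `A` is `σ`-stable and, with the action of `σ`, isomorphic to `ℤ`, `ℤ(1)` or `ℤ[ℤ/2ℤ]`. -/
def IsStandardLattice (σ : Module.End ℤ M) (A : Submodule ℤ M) : Prop :=
  A ∈ σ.invtSubmodule ∧
    ((∃ _e : A ≃ₗ[ℤ] ℤ, ∀ x ∈ A, σ x = x) ∨ (∃ _e : A ≃ₗ[ℤ] ℤ, ∀ x ∈ A, σ x = -x) ∨
      ∃ e : A ≃ₗ[ℤ] ℤ × ℤ, ∀ x y : A, σ x = y → e y = (e x).swap)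

variable {σ : Module.End ℤ M}

theorem IsStandardLattice.map_subtype {K : Submodule ℤ M} (hK : K ∈ σ.invtSubmodule)
    {A : Submodule ℤ K} (hA : IsStandardLattice (σ.restrict hK) A) :
    IsStandardLattice σ (A.map K.subtype) := by
  refine ⟨Module.End.invtSubmodule.map_subtype_mem_of_mem_invtSubmodule σ hK hA.1, ?_⟩
  let E := (K.equivSubtypeMap A).symm
  rcases hA.2 with ⟨e, he⟩ | ⟨e, he⟩ | ⟨e, he⟩
  · exact Or.inl ⟨E.trans e, by rintro _ ⟨y, hy, rfl⟩; exact congr_arg Subtype.val (he y hy)⟩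
  · exact Or.inr <| Or.inl
      ⟨E.trans e, by rintro _ ⟨y, hy, rfl⟩; exact congr_arg Subtype.val (he y hy)⟩
  · exact Or.inr <| Or.inr ⟨E.trans e, fun x y hxy => he _ _ (Subtype.ext hxy)⟩

theorem isStandardLattice_of_forall_apply_eq_smul {A : Submodule ℤ M} {ε : ℤ} (hε : ε * ε = 1)
    (e : A ≃ₗ[ℤ] ℤ) (hA : ∀ x ∈ A, σ x = ε • x) : IsStandardLattice σ A := by
  refine ⟨fun x hx => by rw [mem_comap, hA x hx]; exact A.smul_mem ε hx, ?_⟩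
  rcases Int.eq_one_or_neg_one_of_mul_eq_one hε with rfl | rfl
  · exact Or.inl ⟨e, by simpa using hA⟩
  · exact Or.inr <| Or.inl ⟨e, by simpa using hA⟩

theorem exists_isCompl_eigenline {ε : ℤ} {e : M} {φ : Dual ℤ M} (he : σ e = ε • e)
    (hφe : φ e = 1) (hφ : φ ∘ₗ σ = ε • φ) :
    ∃ A K : Submodule ℤ M, IsCompl A K ∧ A ≠ ⊥ ∧ K ∈ σ.invtSubmodule ∧
      ∃ _ : A ≃ₗ[ℤ] ℤ, ∀ x ∈ A, σ x = ε • x := by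
  let s := toSpanSingleton ℤ M e
  have hs : φ ∘ₗ s = LinearMap.id := by ext; simp [s, hφe]
  refine ⟨range s, ker φ, isCompl_range_ker_of_comp_eq_id hs,
    (Submodule.ne_bot_iff _).mpr ⟨e, ⟨1, one_smul ℤ e⟩, fun h => by simp [h] at hφe⟩,
    ker_mem_invtSubmodule_of_comp_eq (τ := ε • LinearMap.id) (by rw [hφ, smul_comp, id_comp]),
    (LinearEquiv.ofLeftInverse (LinearMap.congr_fun hs)).symm, ?_⟩
  rintro _ ⟨k, rfl⟩
  simp [s, he, smul_comm k ε]

theorem exists_isCompl_regular (hσ : ∀ x, σ (σ x) = x) {w : M} {φ : Dual ℤ M} (hw : φ w = 1)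
    (hσw : φ (σ w) = 0) :
    ∃ A K : Submodule ℤ M, IsCompl A K ∧ A ≠ ⊥ ∧ K ∈ σ.invtSubmodule ∧ IsStandardLattice σ A := by
  let Φ := φ.prod (φ ∘ₗ σ)
  let s := (toSpanSingleton ℤ M w).coprod (toSpanSingleton ℤ M (σ w))
  let τ := (LinearEquiv.prodComm ℤ ℤ ℤ).toLinearMap
  have hs : Φ ∘ₗ s = LinearMap.id := by ext <;> simp [Φ, s, hw, hσw, hσ]
  have hΦ : Φ ∘ₗ σ = τ ∘ₗ Φ := by ext m <;> simp [Φ, τ, hσ]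
  have hsσ : σ ∘ₗ s = s ∘ₗ τ := by ext <;> simp [s, τ, hσ]
  obtain ⟨e, he⟩ := exists_equiv_range_of_comp_eq hs hΦ
  refine ⟨range s, ker Φ, isCompl_range_ker_of_comp_eq_id hs,
    (Submodule.ne_bot_iff _).mpr ⟨w, ⟨(1, 0), by simp [s]⟩, fun h => by simp [h] at hw⟩,
    ker_mem_invtSubmodule_of_comp_eq hΦ, range_mem_invtSubmodule_of_comp_eq hsσ,
    Or.inr <| Or.inr ⟨e, he⟩⟩

variable [Module.Finite ℤ M] [Module.IsTorsionFree ℤ M]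

theorem exists_primitive_eigenvector {ε : ℤ} {x : M} (hx : x ∈ σ.eigenspace ε) (hx0 : x ≠ 0) :
    ∃ (a : ℤ) (e : M) (α : Dual ℤ M), a • e = x ∧ σ e = ε • e ∧ α e = 1 := by
  obtain ⟨a, e, α, rfl, hα⟩ := Free.exists_smul_eq_and_dual_eq_one (R := ℤ) hx0
  have ha : a ≠ 0 := by rintro rfl; simp at hx0
  refine ⟨a, e, α, rfl, smul_right_injective M ha ?_, hα⟩
  show a • σ e = a • ε • e
  rw [← map_smul, Module.End.mem_eigenspace_iff.mp hx, smul_comm]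

theorem exists_isCompl_eigenline_of_sup_eq_top (hσ : ∀ x, σ (σ x) = x) {ε : ℤ}
    (hε : ε * ε = 1) (htop : σ.eigenspace ε ⊔ σ.eigenspace (-ε) = ⊤) {x : M}
    (hx : x ∈ σ.eigenspace ε) (hx0 : x ≠ 0) :
    ∃ A K : Submodule ℤ M, IsCompl A K ∧ A ≠ ⊥ ∧ K ∈ σ.invtSubmodule ∧
      ∃ _ : A ≃ₗ[ℤ] ℤ, ∀ x ∈ A, σ x = ε • x := by
  obtain ⟨-, e, α, -, he, hα⟩ := exists_primitive_eigenvector hx hx0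
  have hne : ε ≠ -ε := by
    intro h
    have : ε = 0 := by omega
    simp [this] at hε
  have hc : IsCompl (σ.eigenspace ε) (σ.eigenspace (-ε)) :=
    ⟨σ.eigenspaces_iSupIndep.pairwiseDisjoint hne, codisjoint_iff.mpr htop⟩
  let P := (σ.eigenspace ε).subtype ∘ₗ (σ.eigenspace ε).projectionOnto _ hc
  have hPσ (m : M) : P (σ m) = ε • P m := by
    have : σ m - ε • m ∈ σ.eigenspace (-ε) := by
      rw [Module.End.mem_eigenspace_iff, map_sub, map_smul, hσ]
      linear_combination (norm := module) -(hε • m)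
    have hP0 : P (σ m - ε • m) = 0 := by
      simp [P, (projectionOnto_apply_eq_zero_iff hc).mpr this]
    rw [← sub_eq_zero, ← hP0, map_sub, map_smul]
  refine exists_isCompl_eigenline he (φ := α ∘ₗ P) ?_ ?_
  · simp [P, projectionOnto_apply_left hc ⟨e, Module.End.mem_eigenspace_iff.mpr he⟩, hα]
  · ext m
    simp [hPσ]

theorem exists_odd_smul_primitive_of_notMem_sup (hσ : ∀ x, σ (σ x) = x) {ε : ℤ}
    (hε : ε * ε = 1) {g : M} (hg : g ∉ σ.eigenspace ε ⊔ σ.eigenspace (-ε)) :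
    ∃ (c : ℤ) (e : M) (α : Dual ℤ M), (2 * c + 1) • e = g + ε • σ g ∧ σ e = ε • e ∧ α e = 1 := by
  have hmem : g + ε • σ g ∈ σ.eigenspace ε := by
    rw [Module.End.mem_eigenspace_iff, map_add, map_smul, hσ]
    linear_combination (norm := module) -(hε • σ g)
  have hne : g + ε • σ g ≠ 0 := by
    intro h
    refine hg (mem_sup_right (Module.End.mem_eigenspace_iff.mpr ?_))
    linear_combination (norm := module) ε • h - hε • σ g
  obtain ⟨a, e, α, hae, he, hα⟩ := exists_primitive_eigenvector hmem hne
  rcases Int.even_or_odd' a with ⟨c, rfl | rfl⟩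
  · refine absurd (mem_sup.mpr ⟨c • e, ?_, g - c • e, ?_, add_sub_cancel _ _⟩) hg
    · rw [Module.End.mem_eigenspace_iff, map_smul, he, smul_comm]
    · rw [Module.End.mem_eigenspace_iff, map_sub, map_smul, he]
      linear_combination (norm := module) (-ε) • hae - hε • σ g
  · exact ⟨c, e, α, hae, he, hα⟩

theorem exists_dual_apply_eq_one_of_notMem_sup (hσ : ∀ x, σ (σ x) = x) {g : M}
    (hg : g ∉ σ.eigenspace 1 ⊔ σ.eigenspace (-1)) :
    ∃ (w : M) (φ : Dual ℤ M), φ w = 1 ∧ φ (σ w) = 0 := by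
  obtain ⟨c, e, α, hce, he, hα⟩ := exists_odd_smul_primitive_of_notMem_sup hσ (one_mul 1) hg
  obtain ⟨d, f, β, hdf, hf, hβ⟩ := exists_odd_smul_primitive_of_notMem_sup hσ (ε := -1)
    (by norm_num) (by rwa [neg_neg, sup_comm])
  set w := g - c • e - d • f
  have hwe : α w + α (σ w) = 1 := by
    rw [← map_add, ← hα]
    congr 1
    simp only [w, map_sub, map_smul, he, hf]
    linear_combination (norm := module) -hce
  have hwf : β w - β (σ w) = 1 := by
    rw [← map_sub, ← hβ]
    congr 1
    simp only [w, map_sub, map_smul, hf, he]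
    linear_combination (norm := module) -hdf
  -- `β - β ∘ₗ σ` is `1` at `w` and `0` at `e = w + σ w`: it corrects `α w` to `1` and keeps the
  -- sum of the values at `w` and `σ w` equal to `α e = 1`.
  refine ⟨w, α + (1 - α w) • (β - β ∘ₗ σ), ?_, ?_⟩
  · simp [hwf]
  · simp only [LinearMap.add_apply, LinearMap.smul_apply, LinearMap.sub_apply, coe_comp,
      Function.comp_apply, hσ, Int.zsmul_eq_mul]
    linear_combination hwe - (1 - α w) * hwf

theorem exists_isCompl_isStandardLattice [Nontrivial M] (hσ : ∀ x, σ (σ x) = x) :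
    ∃ A K : Submodule ℤ M, IsCompl A K ∧ A ≠ ⊥ ∧ K ∈ σ.invtSubmodule ∧ IsStandardLattice σ A := by
  by_cases htop : σ.eigenspace 1 ⊔ σ.eigenspace (-1) = ⊤
  · obtain ⟨ε, hε, htopε, x, hx, hx0⟩ : ∃ ε : ℤ, ε * ε = 1 ∧
        σ.eigenspace ε ⊔ σ.eigenspace (-ε) = ⊤ ∧ ∃ x ∈ σ.eigenspace ε, x ≠ 0 := by
      rcases eq_or_ne (σ.eigenspace 1) ⊥ with hF | hF
      · rw [hF, bot_sup_eq] at htop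
        obtain ⟨x, hx⟩ := exists_ne (0 : M)
        exact ⟨-1, by norm_num, by simp [htop], x, htop ▸ mem_top, hx⟩
      · exact ⟨1, one_mul 1, htop, exists_mem_ne_zero_of_ne_bot hF⟩
    obtain ⟨A, K, hAK, hA, hK, e, hAε⟩ :=
      exists_isCompl_eigenline_of_sup_eq_top hσ hε htopε hx hx0
    exact ⟨A, K, hAK, hA, hK, isStandardLattice_of_forall_apply_eq_smul hε e hAε⟩
  · obtain ⟨g, -, hg⟩ := SetLike.exists_of_lt (lt_top_iff_ne_top.mpr htop)
    obtain ⟨w, φ, hw, hσw⟩ := exists_dual_apply_eq_one_of_notMem_sup hσ hg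
    exact exists_isCompl_regular hσ hw hσw

theorem exists_iSupIndep_isStandardLattice (hσ : ∀ x, σ (σ x) = x) (K : Submodule ℤ M)
    (hK : K ∈ σ.invtSubmodule) :
    ∃ (n : ℕ) (A : Fin n → Submodule ℤ M), iSupIndep A ∧ ⨆ i, A i = K ∧
      ∀ i, IsStandardLattice σ (A i) := by
  induction hr : finrank ℤ K using Nat.strong_induction_on generalizing K with
  | _ r ih =>
    rcases eq_or_ne K ⊥ with rfl | hK0
    · exact ⟨0, Fin.elim0, iSupIndep_subsingleton _, by simp, fun i => i.elim0⟩
    have : Nontrivial K := nontrivial_iff_ne_bot.mpr hK0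
    obtain ⟨A, L, hAL, hA, hL, hstd⟩ :=
      exists_isCompl_isStandardLattice (σ := σ.restrict hK) fun x => Subtype.ext (hσ x)
    have hlt : finrank ℤ (L.map K.subtype) < r := by
      rw [finrank_map_subtype_eq, ← hr]
      exact finrank_lt_finrank_of_isCompl hAL hA
    obtain ⟨n, B, hB, hsupB, hstdB⟩ := ih _ hlt (L.map K.subtype)
      (Module.End.invtSubmodule.map_subtype_mem_of_mem_invtSubmodule σ hK hL) rfl
    refine ⟨n + 1, Fin.cons (A.map K.subtype) B, hB.fin_cons ?_, ?_,
      Fin.cases (hstd.map_subtype hK) hstdB⟩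
    · rw [hsupB]
      exact disjoint_map K.injective_subtype hAL.disjoint
    · rw [iSup_fin_cons, hsupB, ← Submodule.map_sup, hAL.sup_eq_top, map_subtype_top]

end Involution

/-- A finitely generated torsion-free `ℤ/2ℤ`-module (given by an involution `σ` of a finitely
generated torsion-free abelian group `M`) decomposes as a direct sum of `σ`-stable submodules,
each equivariantly isomorphic to `ℤ` (trivial action), `ℤ` (sign action), or `ℤ[ℤ/2ℤ] ≅ ℤ²`
(swap action). -/
theorem stmt_2 {M : Type*} [AddCommGroup M] [Module.Finite ℤ M] [NoZeroSMulDivisors ℤ M]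
    (σ : M ≃ₗ[ℤ] M) (hσ : ∀ x : M, σ (σ x) = x) :
    ∃ (n : ℕ) (A : Fin n → Submodule ℤ M), DirectSum.IsInternal A ∧
      ∀ i : Fin n, (∀ x ∈ A i, σ x ∈ A i) ∧
        ((∃ _e : ↥(A i) ≃ₗ[ℤ] ℤ, ∀ x ∈ A i, σ x = x) ∨
         (∃ _e : ↥(A i) ≃ₗ[ℤ] ℤ, ∀ x ∈ A i, σ x = -x) ∨
         (∃ e : ↥(A i) ≃ₗ[ℤ] ℤ × ℤ, ∀ x y : ↥(A i),
            σ (x : M) = (y : M) → e y = Prod.swap (e x))) := by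
  obtain ⟨n, A, hA, hsup, hstd⟩ :=
    exists_iSupIndep_isStandardLattice (σ := σ.toLinearMap) hσ ⊤ fun x _ => trivial
  exact ⟨n, A, DirectSum.isInternal_submodule_of_iSupIndep_of_iSup_eq_top hA hsup, hstd⟩
end

section
/- Let G = Z/2Z and let M be a finitely generated torsion-free G-module. Then M is a permutation G-module (i.e. isomorphic to a direct sum of copies of the trivial module Z and the regular module Z[G]) if and only if the first group cohomology H¹(G, M) vanishes. -/
/-!
`H¹` is additive over `σ`-stable direct sums, and it vanishes on `ℤ` (a cocycle satisfies
`2 x = 0`) and on `ℤ[ℤ/2ℤ] ≅ ℤ²` (the cocycle `(t, -t)` is the coboundary of `(t, 0)`).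

Conversely, induct on the rank; call `u` unimodular if `f u = 1` for some functional `f`.
If `σ = 1`, split off the line through a unimodular `u`, with complement `ker f`. Otherwise some
anti-invariant `x` is unimodular, say `α x = 1`, and `H¹ = 0` gives `x = y - σ y`. The invariant
vector `y + σ y` is an odd multiple of a unimodular one, since `α (y + σ y) = 1 + 2 α (σ y)`, so
moving `y` by an invariant vector makes `y + σ y` itself unimodular. Functionals that are `1` on
`y - σ y` and on `y + σ y` combine into `φ` with `φ y = 1` and `φ (σ y) = 0`; hence
`span {y, σ y} ≅ ℤ[ℤ/2ℤ]` has the `σ`-stable complement `ker φ ⊓ ker (φ ∘ σ)`, on which `H¹`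
still vanishes.
-/

open Module Submodule

theorem exists_eq_smul_and_apply_eq_one {R M : Type*} [CommRing R] [IsDomain R]
    [IsPrincipalIdealRing R] [AddCommGroup M] [Module R M] [Module.Finite R M]
    [IsTorsionFree R M] {v : M} (hv : v ≠ 0) :
    ∃ (d : R) (u : M) (f : M →ₗ[R] R), d ≠ 0 ∧ v = d • u ∧ f u = 1 := by
  -- `d` generates the ideal `{f v | f ∈ M*}`, so it divides every coordinate of `v`
  obtain ⟨d, hd⟩ := IsPrincipal.principal (LinearMap.range (Dual.eval R M v))
  have hdvd : ∀ f : M →ₗ[R] R, d ∣ f v := fun f => by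
    have : f v ∈ LinearMap.range (Dual.eval R M v) := ⟨f, rfl⟩
    rw [hd, mem_span_singleton] at this
    obtain ⟨c, hc⟩ := this
    exact ⟨c, by rw [← hc, smul_eq_mul, mul_comm]⟩
  obtain ⟨f, hf⟩ : ∃ f : M →ₗ[R] R, f v = d :=
    (hd ▸ mem_span_singleton_self d : d ∈ LinearMap.range (Dual.eval R M v))
  let b := Free.chooseBasis R M
  choose c hc using fun i => hdvd (b.coord i)
  have hvd : v = d • ∑ i, c i • b i := by
    conv_lhs => rw [← b.sum_repr v]
    simp only [Finset.smul_sum, smul_smul]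
    exact Finset.sum_congr rfl fun i _ => by rw [← hc i]; rfl
  have hd0 : d ≠ 0 := by
    rintro rfl
    exact hv (by simpa using hvd)
  refine ⟨d, _, f, hd0, hvd, mul_left_cancel₀ hd0 ?_⟩
  rw [mul_one, ← smul_eq_mul, ← map_smul, ← hvd, hf]

theorem isCompl_span_range_iInf_ker {R M ι : Type*} [CommRing R] [AddCommGroup M] [Module R M]
    [Fintype ι] [DecidableEq ι] (v : ι → M) (f : ι → M →ₗ[R] R)
    (h : ∀ i j, f i (v j) = if i = j then 1 else 0) :
    IsCompl (span R (Set.range v)) (⨅ i, LinearMap.ker (f i)) := by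
  have hf : ∀ i (c : ι → R), f i (∑ j, c j • v j) = c i := fun i c => by simp [h]
  constructor
  · rw [disjoint_def]
    intro x hx hker
    obtain ⟨c, rfl⟩ := (mem_span_range_iff_exists_fun R).mp hx
    have hc : c = 0 := funext fun i => by
      rw [← hf i c]
      exact (mem_iInf _).mp hker i
    simp [hc]
  · rw [codisjoint_iff, eq_top_iff]
    intro x _
    have hproj : ∑ j, f j x • v j ∈ span R (Set.range v) :=
      sum_mem fun j _ => smul_mem _ _ (subset_span ⟨j, rfl⟩)
    have hrest : x - ∑ j, f j x • v j ∈ ⨅ i, LinearMap.ker (f i) :=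
      (mem_iInf _).mpr fun i => by simp [hf]
    simpa using add_mem (mem_sup_left hproj) (mem_sup_right hrest)

theorem finrank_lt_of_isCompl {M : Type*} [AddCommGroup M] [Module.Finite ℤ M]
    [IsTorsionFree ℤ M] {A C : Submodule ℤ M} (h : IsCompl A C) (hA : A ≠ ⊥) :
    finrank ℤ C < finrank ℤ M := by
  obtain ⟨x, hx, hx0⟩ := exists_mem_ne_zero_of_ne_bot hA
  have : 0 < finrank ℤ A := finrank_pos_iff_exists_ne_zero.mpr ⟨⟨x, hx⟩, by simpa using hx0⟩
  have := A.finrank_quotient_add_finrank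
  rw [(quotientEquivOfIsCompl A C h).finrank_eq] at this
  omega

theorem Finset.SupIndep.exists_isInternal_fin {R M : Type*} [Ring R] [AddCommGroup M]
    [Module R M] {s : Finset (Submodule R M)} (hs : s.SupIndep id) (htop : s.sup id = ⊤) :
    ∃ (n : ℕ) (A : Fin n → Submodule R M), DirectSum.IsInternal A ∧ ∀ i, A i ∈ s := by
  refine ⟨s.card, fun i => s.equivFin.symm i, ?_, fun i => (s.equivFin.symm i).2⟩
  refine DirectSum.isInternal_submodule_of_iSupIndep_of_iSup_eq_top
    (hs.independent.comp s.equivFin.symm.injective) ?_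
  rw [s.equivFin.symm.iSup_comp (g := fun x : s => (x : Submodule R M)), ← htop,
    Finset.sup_eq_iSup, iSup_subtype']
  rfl

section Involution

variable {M : Type*} [AddCommGroup M] (σ : M →ₗ[ℤ] M)

/-- `H¹(ℤ/2ℤ, N) = ker (1 + σ) / im (1 - σ)` vanishes. -/
def H1TrivialOn (N : Submodule ℤ M) : Prop :=
  ∀ x ∈ N, x + σ x = 0 → ∃ y ∈ N, x = y - σ y

/- The summands of a permutation module: a copy of the trivial module `ℤ`, and a copy of the
regular module `ℤ[ℤ/2ℤ]` with basis the orbit `{v, σ v}`. -/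

def IsTrivialPiece (A : Submodule ℤ M) : Prop :=
  ∃ v : M, v ≠ 0 ∧ σ v = v ∧ A = span ℤ {v}

def IsRegularPiece (A : Submodule ℤ M) : Prop :=
  ∃ v : M, LinearIndependent ℤ ![v, σ v] ∧ A = span ℤ {v, σ v}

variable {σ}

theorem IsTrivialPiece.apply_eq {A : Submodule ℤ M} (h : IsTrivialPiece σ A) :
    ∀ x ∈ A, σ x = x := by
  obtain ⟨v, -, hσv, rfl⟩ := h
  intro x hx
  obtain ⟨a, rfl⟩ := mem_span_singleton.mp hx
  rw [map_smul, hσv]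

theorem IsTrivialPiece.mapsTo {A : Submodule ℤ M} (h : IsTrivialPiece σ A) :
    ∀ x ∈ A, σ x ∈ A :=
  fun x hx => (h.apply_eq x hx).symm ▸ hx

theorem IsRegularPiece.mapsTo (hσ : ∀ x, σ (σ x) = x) {A : Submodule ℤ M}
    (h : IsRegularPiece σ A) : ∀ x ∈ A, σ x ∈ A := by
  obtain ⟨v, -, rfl⟩ := h
  intro x hx
  obtain ⟨a, b, rfl⟩ := mem_span_pair.mp hx
  rw [map_add, map_smul, map_smul, hσ, add_comm]
  exact mem_span_pair.mpr ⟨b, a, rfl⟩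

theorem IsTrivialPiece.ne_bot {A : Submodule ℤ M} (h : IsTrivialPiece σ A) : A ≠ ⊥ := by
  obtain ⟨v, hv, -, rfl⟩ := h
  simpa using hv

theorem IsRegularPiece.ne_bot {A : Submodule ℤ M} (h : IsRegularPiece σ A) : A ≠ ⊥ := by
  obtain ⟨v, hv, rfl⟩ := h
  exact fun h => hv.ne_zero 0 <| (span_eq_bot.mp h) v (by simp)

theorem IsTrivialPiece.exists_equiv [IsTorsionFree ℤ M] {A : Submodule ℤ M}
    (h : IsTrivialPiece σ A) : ∃ _e : A ≃ₗ[ℤ] ℤ, ∀ x ∈ A, σ x = x := by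
  obtain ⟨v, hv, -, rfl⟩ := id h
  exact ⟨(LinearEquiv.toSpanNonzeroSingleton ℤ M v hv).symm, h.apply_eq⟩

theorem IsRegularPiece.exists_equiv (hσ : ∀ x, σ (σ x) = x) {A : Submodule ℤ M}
    (h : IsRegularPiece σ A) :
    ∃ e : A ≃ₗ[ℤ] ℤ × ℤ, ∀ x y : A, σ x = y → e y = (e x).swap := by
  obtain ⟨v, hv, rfl⟩ := h
  let F : ℤ × ℤ →ₗ[ℤ] M :=
    (LinearMap.toSpanSingleton ℤ M v).coprod (LinearMap.toSpanSingleton ℤ M (σ v))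
  have hF : ∀ p, F p = p.1 • v + p.2 • σ v := fun _ => rfl
  have hinj : Function.Injective F := by
    rw [← LinearMap.ker_eq_bot, LinearMap.ker_eq_bot']
    intro p hp
    obtain ⟨h1, h2⟩ := LinearIndependent.pair_iff.mp hv p.1 p.2 hp
    exact Prod.ext h1 h2
  have hrange : LinearMap.range F = span ℤ {v, σ v} := by
    rw [LinearMap.range_coprod, ← LinearMap.span_singleton_eq_range,
      ← LinearMap.span_singleton_eq_range, span_insert]
  let e := ((LinearEquiv.ofInjective F hinj).trans (LinearEquiv.ofEq _ _ hrange)).symm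
  have he : ∀ p, (e.symm p : M) = F p := fun _ => rfl
  refine ⟨e, fun x y hxy => ?_⟩
  rw [← e.eq_symm_apply]
  apply Subtype.ext
  rw [← hxy, he, ← e.symm_apply_apply x, he, e.apply_symm_apply, hF, hF]
  simp [hσ, add_comm]

section Map

variable {N : Type*} [AddCommGroup N] {τ : N →ₗ[ℤ] N} {g : N →ₗ[ℤ] M}

theorem IsTrivialPiece.map (hg : Function.Injective g) (hgτ : ∀ x, g (τ x) = σ (g x))
    {B : Submodule ℤ N} (hB : IsTrivialPiece τ B) : IsTrivialPiece σ (B.map g) := by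
  obtain ⟨v, hv, hτv, rfl⟩ := hB
  exact ⟨g v, (map_ne_zero_iff g hg).mpr hv, by rw [← hgτ, hτv], by simp [map_span]⟩

theorem IsRegularPiece.map (hg : Function.Injective g) (hgτ : ∀ x, g (τ x) = σ (g x))
    {B : Submodule ℤ N} (hB : IsRegularPiece τ B) : IsRegularPiece σ (B.map g) := by
  obtain ⟨v, hv, rfl⟩ := hB
  refine ⟨g v, ?_, by simp [map_span, Set.image_pair, hgτ]⟩
  rw [← hgτ]
  exact LinearIndependent.pair_iff.mpr fun s t hst =>
    LinearIndependent.pair_iff.mp hv s t (hg (by simpa using hst))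

end Map

theorem h1TrivialOn_of_forall_eq [IsTorsionFree ℤ M] {A : Submodule ℤ M}
    (h : ∀ x ∈ A, σ x = x) : H1TrivialOn σ A := by
  intro x hx hx0
  rw [h x hx, ← two_smul ℤ, smul_eq_zero] at hx0
  exact ⟨0, A.zero_mem, by simpa using hx0.resolve_left two_ne_zero⟩

theorem h1TrivialOn_of_equiv_prod {A : Submodule ℤ M} (hA : ∀ x ∈ A, σ x ∈ A)
    (e : A ≃ₗ[ℤ] ℤ × ℤ) (he : ∀ x y : A, σ x = y → e y = (e x).swap) : H1TrivialOn σ A := by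
  let τ : A →ₗ[ℤ] A := σ.restrict hA
  have heτ : ∀ x, e (τ x) = (e x).swap := fun x => he x _ rfl
  intro x hx hx0
  let a : A := ⟨x, hx⟩
  -- in coordinates `a = (t, -t)`, the coboundary of `(t, 0)`
  have hcoord : (e a).2 = -(e a).1 := by
    have := congrArg (fun a => (e a).1) (Subtype.ext hx0 : a + τ a = 0)
    simp only [map_add, heτ, map_zero, Prod.fst_add, Prod.fst_swap, Prod.fst_zero] at this
    linarith
  let b : A := e.symm ((e a).1, 0)
  have hab : a = b - τ b := e.injective <| by
    rw [map_sub, heτ, e.apply_symm_apply]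
    ext <;> simp [hcoord]
  exact ⟨b, b.2, congrArg Subtype.val hab⟩

theorem H1TrivialOn.sup {P Q : Submodule ℤ M} (hPσ : ∀ x ∈ P, σ x ∈ P)
    (hQσ : ∀ x ∈ Q, σ x ∈ Q) (hPQ : Disjoint P Q) (hP : H1TrivialOn σ P)
    (hQ : H1TrivialOn σ Q) : H1TrivialOn σ (P ⊔ Q) := by
  intro x hx hx0
  obtain ⟨p, hp, q, hq, rfl⟩ := mem_sup.mp hx
  rw [map_add, add_add_add_comm] at hx0
  have hp0 : p + σ p = 0 :=
    disjoint_def.mp hPQ _ (add_mem hp (hPσ p hp))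
      (eq_neg_of_add_eq_zero_left hx0 ▸ neg_mem (add_mem hq (hQσ q hq)))
  rw [hp0, zero_add] at hx0
  obtain ⟨p', hp', rfl⟩ := hP p hp hp0
  obtain ⟨q', hq', rfl⟩ := hQ q hq hx0
  exact ⟨p' + q', add_mem (mem_sup_left hp') (mem_sup_right hq'), by rw [map_add]; abel⟩

theorem h1TrivialOn_finset_sup {ι : Type*} {s : Finset ι} {A : ι → Submodule ℤ M}
    (hs : s.SupIndep A) (hAσ : ∀ i ∈ s, ∀ x ∈ A i, σ x ∈ A i)
    (hA : ∀ i ∈ s, H1TrivialOn σ (A i)) : H1TrivialOn σ (s.sup A) := by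
  classical
  induction s using Finset.induction_on with
  | empty => exact fun x hx _ => ⟨0, zero_mem _, by simpa using hx⟩
  | insert i s hi ih =>
    have hsσ : ∀ x ∈ s.sup A, σ x ∈ s.sup A :=
      Finset.sup_induction (p := fun N : Submodule ℤ M => ∀ x ∈ N, σ x ∈ N)
        (fun x hx => by simp_all) (fun P hP Q hQ => by
          intro x hx
          obtain ⟨p, hp, q, hq, rfl⟩ := mem_sup.mp hx
          exact map_add σ p q ▸ add_mem_sup (hP p hp) (hQ q hq))
        (fun j hj => hAσ j (Finset.mem_insert_of_mem hj))
    rw [Finset.sup_insert]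
    exact H1TrivialOn.sup (hAσ i (s.mem_insert_self i)) hsσ
      (hs (s.subset_insert i) (s.mem_insert_self i) hi) (hA i (s.mem_insert_self i))
      (ih (hs.subset (s.subset_insert i)) (fun j hj => hAσ j (Finset.mem_insert_of_mem hj))
        (fun j hj => hA j (Finset.mem_insert_of_mem hj)))

theorem H1TrivialOn.of_isCompl {A C : Submodule ℤ M} (hH : H1TrivialOn σ ⊤)
    (hA : ∀ x ∈ A, σ x ∈ A) (hC : ∀ x ∈ C, σ x ∈ C) (h : IsCompl A C) : H1TrivialOn σ C := by
  intro x hx hx0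
  obtain ⟨y, -, rfl⟩ := hH _ mem_top hx0
  obtain ⟨a, ha, c, hc, rfl⟩ := mem_sup.mp (h.codisjoint.eq_top ▸ mem_top : y ∈ A ⊔ C)
  have hA0 : a - σ a = 0 := disjoint_def.mp h.disjoint _ (sub_mem ha (hA a ha)) <| by
    convert sub_mem hx (sub_mem hc (hC c hc)) using 1
    rw [map_add]; abel
  exact ⟨c, hc, by rw [map_add, add_sub_add_comm, hA0, zero_add]⟩

theorem H1TrivialOn.restrict {N : Submodule ℤ M} (hN : ∀ x ∈ N, σ x ∈ N)
    (h : H1TrivialOn σ N) : H1TrivialOn (σ.restrict hN) ⊤ := by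
  intro x _ hx0
  obtain ⟨y, hy, hxy⟩ := h x x.2 (congrArg Subtype.val hx0)
  exact ⟨⟨y, hy⟩, mem_top, Subtype.ext hxy⟩

theorem exists_apply_eq_one_apply_eq_zero (hσ : ∀ x, σ (σ x) = x) {y : M}
    {α β : M →ₗ[ℤ] ℤ} (hα : α (y - σ y) = 1) (hβ : β (y + σ y) = 1) :
    ∃ φ : M →ₗ[ℤ] ℤ, φ y = 1 ∧ φ (σ y) = 0 := by
  refine ⟨α - α (σ y) • (β + β ∘ₗ σ), ?_, ?_⟩
  · simp only [map_sub, map_add] at hα hβ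
    simp only [LinearMap.sub_apply, LinearMap.smul_apply, LinearMap.add_apply,
      LinearMap.comp_apply, smul_eq_mul]
    linear_combination hα - α (σ y) * hβ
  · simp only [map_add] at hβ
    simp only [LinearMap.sub_apply, LinearMap.smul_apply, LinearMap.add_apply,
      LinearMap.comp_apply, smul_eq_mul, hσ]
    linear_combination -α (σ y) * hβ

variable [Module.Finite ℤ M] [IsTorsionFree ℤ M]

theorem exists_sub_eq_and_apply_add_eq_one (hσ : ∀ x, σ (σ x) = x) (hH : H1TrivialOn σ ⊤)
    {x : M} {α : M →ₗ[ℤ] ℤ} (hx : x + σ x = 0) (hα : α x = 1) :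
    ∃ y : M, y - σ y = x ∧ ∃ β : M →ₗ[ℤ] ℤ, β (y + σ y) = 1 := by
  obtain ⟨y₁, -, rfl⟩ := hH x mem_top hx
  have hs : y₁ + σ y₁ ≠ 0 := by
    intro h
    have : y₁ - σ y₁ = (2 : ℤ) • y₁ := by
      rw [two_smul ℤ, eq_neg_of_add_eq_zero_right h]; abel
    rw [this, map_smul, smul_eq_mul] at hα
    omega
  obtain ⟨k, u, β, hk, hsu, hβ⟩ := exists_eq_smul_and_apply_eq_one (R := ℤ) hs
  have hσu : σ u = u := smul_right_injective M hk <| by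
    simp only [← map_smul, ← hsu, map_add, hσ, add_comm]
  obtain ⟨j, rfl⟩ : Odd k := by
    have h := congrArg α hsu
    simp only [map_add, map_sub, map_smul, smul_eq_mul] at h hα
    exact (Int.odd_mul.mp ⟨α (σ y₁), by linarith⟩).1
  refine ⟨y₁ - j • u, by rw [map_sub, map_smul, hσu]; abel, β, ?_⟩
  convert hβ using 2
  rw [map_sub, map_smul, hσu, sub_add_sub_comm, hsu]
  simp only [add_smul, one_smul, mul_smul, two_smul]
  abel

theorem exists_apply_eq_one_apply_eq_zero_of_ne (hσ : ∀ x, σ (σ x) = x)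
    (hH : H1TrivialOn σ ⊤) {m : M} (hm : σ m ≠ m) :
    ∃ (y : M) (φ : M →ₗ[ℤ] ℤ), φ y = 1 ∧ φ (σ y) = 0 := by
  have hx : m - σ m + σ (m - σ m) = 0 := by rw [map_sub, hσ]; abel
  obtain ⟨d, x, α, hd, hdx, hα⟩ := exists_eq_smul_and_apply_eq_one (R := ℤ) (sub_ne_zero.mpr hm.symm)
  have hx₀ : x + σ x = 0 := smul_right_injective M hd <| by
    simpa only [smul_add, ← map_smul, ← hdx, smul_zero] using hx
  obtain ⟨y, hy, β, hβ⟩ := exists_sub_eq_and_apply_add_eq_one hσ hH hx₀ hα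
  exact ⟨y, exists_apply_eq_one_apply_eq_zero hσ (hy ▸ hα) hβ⟩

theorem exists_piece_isCompl [Nontrivial M] (hσ : ∀ x, σ (σ x) = x) (hH : H1TrivialOn σ ⊤) :
    ∃ A C : Submodule ℤ M, (IsTrivialPiece σ A ∨ IsRegularPiece σ A) ∧ IsCompl A C ∧
      ∀ x ∈ C, σ x ∈ C := by
  by_cases hid : ∀ m, σ m = m
  · obtain ⟨v, hv⟩ := exists_ne (0 : M)
    obtain ⟨-, u, f, -, -, hu⟩ := exists_eq_smul_and_apply_eq_one (R := ℤ) hv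
    refine ⟨span ℤ {u}, LinearMap.ker f, Or.inl ⟨u, ?_, hid u, rfl⟩, ?_,
      fun x hx => (hid x).symm ▸ hx⟩
    · rintro rfl
      simp at hu
    · simpa using isCompl_span_range_iInf_ker ![u] ![f] (by simp [hu])
  · obtain ⟨m, hm⟩ := not_forall.mp hid
    obtain ⟨y, φ, hy, hσy⟩ := exists_apply_eq_one_apply_eq_zero_of_ne hσ hH hm
    have hcompl := isCompl_span_range_iInf_ker ![y, σ y] ![φ, φ ∘ₗ σ]
      (by intro i j; fin_cases i <;> fin_cases j <;> simp [hy, hσy, hσ])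
    rw [Matrix.range_cons_cons_empty] at hcompl
    refine ⟨_, _, Or.inr ⟨y, ?_, rfl⟩, hcompl, ?_⟩
    · refine LinearIndependent.pair_iff.mpr fun s t hst => ⟨?_, ?_⟩
      · simpa [hy, hσy] using congrArg φ hst
      · simpa [hy, hσy, hσ] using congrArg (φ ∘ₗ σ) hst
    · simp only [mem_iInf, LinearMap.mem_ker, Fin.forall_fin_two]
      intro x hx
      simpa [hσ] using hx.symm

theorem exists_finset_pieces (hσ : ∀ x, σ (σ x) = x) (hH : H1TrivialOn σ ⊤) :
    ∃ s : Finset (Submodule ℤ M), s.SupIndep id ∧ s.sup id = ⊤ ∧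
      ∀ A ∈ s, IsTrivialPiece σ A ∨ IsRegularPiece σ A := by
  induction hn : finrank ℤ M using Nat.strong_induction_on generalizing M with
  | _ n ih =>
  rcases subsingleton_or_nontrivial M with hM | hM
  · exact ⟨∅, Finset.supIndep_empty _, Subsingleton.elim _ _, by simp⟩
  obtain ⟨A, C, hApiece, hAC, hCσ⟩ := exists_piece_isCompl hσ hH
  have hAσ : ∀ x ∈ A, σ x ∈ A := hApiece.elim IsTrivialPiece.mapsTo (IsRegularPiece.mapsTo hσ)
  have hlt : finrank ℤ C < n :=
    hn ▸ finrank_lt_of_isCompl hAC (hApiece.elim IsTrivialPiece.ne_bot IsRegularPiece.ne_bot)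
  obtain ⟨t, ht, htop, htpieces⟩ := ih _ hlt (σ := σ.restrict hCσ)
    (fun x => Subtype.ext (hσ x)) ((hH.of_isCompl hAσ hCσ hAC).restrict hCσ) rfl
  classical
  have hmap : ∀ x : C, C.subtype (σ.restrict hCσ x) = σ (C.subtype x) := fun _ => rfl
  have htC : (t.image (map C.subtype)).sup id = C := by
    have := Finset.apply_sup_eq_sup_comp (s := t) (f := id) (map C.subtype)
      (fun _ _ => Submodule.map_sup ..) (map_bot _)
    rw [htop, map_subtype_top] at this
    rw [Finset.sup_image]
    exact this.symm
  refine ⟨insert A (t.image (map C.subtype)), ?_, ?_, ?_⟩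
  · refine (Finset.SupIndep.image ?_).insert (by rw [htC]; exact hAC.disjoint)
    exact (LinearMap.iSupIndep_map C.subtype C.injective_subtype ht.independent).supIndep
  · rw [Finset.sup_insert, id, htC, hAC.sup_eq_top]
  · simp only [Finset.mem_insert, Finset.mem_image]
    rintro _ (rfl | ⟨B, hB, rfl⟩)
    · exact hApiece
    · exact (htpieces B hB).imp (·.map C.injective_subtype hmap) (·.map C.injective_subtype hmap)

end Involution

/-- A finitely generated torsion-free `ℤ/2ℤ`-module (given by an involution `σ` of a finitely
generated torsion-free abelian group `M`) is a permutation module — i.e. a direct sum of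
`σ`-stable submodules each equivariantly isomorphic to the trivial module `ℤ` or the regular
module `ℤ[ℤ/2ℤ] ≅ ℤ²` — if and only if `H¹(ℤ/2ℤ, M) = ker(1+σ)/im(1−σ)` vanishes. -/
theorem stmt_3 {M : Type*} [AddCommGroup M] [Module.Finite ℤ M] [NoZeroSMulDivisors ℤ M]
    (σ : M ≃ₗ[ℤ] M) (hσ : ∀ x : M, σ (σ x) = x) :
    (∃ (n : ℕ) (A : Fin n → Submodule ℤ M), DirectSum.IsInternal A ∧
      ∀ i : Fin n, (∀ x ∈ A i, σ x ∈ A i) ∧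
        ((∃ _e : ↥(A i) ≃ₗ[ℤ] ℤ, ∀ x ∈ A i, σ x = x) ∨
         (∃ e : ↥(A i) ≃ₗ[ℤ] ℤ × ℤ, ∀ x y : ↥(A i),
            σ (x : M) = (y : M) → e y = Prod.swap (e x)))) ↔
    (∀ x : M, x + σ x = 0 → ∃ y : M, x = y - σ y) := by
  constructor
  · rintro ⟨n, A, hA, hpieces⟩ x hx
    have hH := h1TrivialOn_finset_sup (σ := (σ : M →ₗ[ℤ] M))
      (hA.submodule_iSupIndep.supIndep' Finset.univ) (fun i _ => (hpieces i).1) fun i _ =>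
        (hpieces i).2.elim (fun ⟨_, hfix⟩ => h1TrivialOn_of_forall_eq hfix)
          fun ⟨e, he⟩ => h1TrivialOn_of_equiv_prod (hpieces i).1 e he
    rw [Finset.sup_univ_eq_iSup, hA.submodule_iSup_eq_top] at hH
    obtain ⟨y, -, hy⟩ := hH x mem_top hx
    exact ⟨y, hy⟩
  · intro hH
    obtain ⟨s, hs, htop, hpieces⟩ := exists_finset_pieces (σ := (σ : M →ₗ[ℤ] M)) hσ
      fun x _ hx => (hH x hx).imp fun y hy => ⟨mem_top, hy⟩
    obtain ⟨n, A, hA, hAs⟩ := hs.exists_isInternal_fin htop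
    refine ⟨n, A, hA, fun i => ?_⟩
    rcases hpieces _ (hAs i) with h | h
    · exact ⟨h.mapsTo, Or.inl h.exists_equiv⟩
    · exact ⟨h.mapsTo hσ, Or.inr (h.exists_equiv hσ)⟩
end
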